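/- Any F₂-representation of Γ_Δ of dimension 2 on which the element c = a² acts without nonzero fixed vectors is isomorphic to the representation D given by ρ_D(a) = (0 1; 1 1), ρ_D(b) = (0 1; 1 0). -/

import Mathlib

/-
Write `A`, `B` for the actions of `a`, `b`. In characteristic 2 every involution `u` fixes a
nonzero vector (`x + u x` for any `x` it moves), and since `A` has no nonzero fixed vector, such a
`w` together with `A w` is a basis. Applied to the involution `A³`, which commutes with `A`, this
gives `A³ = 1`, hence `A² + A + 1 = 0`. Then `A⁻¹ B` is an involution as well, and a nonzero vector
`v` it fixes yields the basis `v, A v` in which `A` and `B` act by the matrices of `D`.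
-/

/-- Relations for the binary dihedral group of order 12:
`Γ_Δ = ⟨a, b | a⁶ = 1, b² = a³, ab = ba⁻¹⟩`, generators `a = of 0`, `b = of 1`. -/
def gammaRels : Set (FreeGroup (Fin 2)) :=
  {FreeGroup.of 0 ^ 6,
   FreeGroup.of 1 ^ 2 * (FreeGroup.of 0 ^ 3)⁻¹,
   FreeGroup.of 0 * FreeGroup.of 1 * (FreeGroup.of 1 * (FreeGroup.of 0)⁻¹)⁻¹}

theorem Module.Basis.equivFun_apply_eq_mulVecLin {ι R M : Type*} [Fintype ι] [DecidableEq ι]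
    [CommRing R] [AddCommGroup M] [Module R M] (bas : Module.Basis ι R M) {f : Module.End R M}
    {A : Matrix ι ι R} (h : ∀ j, f (bas j) = ∑ i, A i j • bas i) (x : M) :
    bas.equivFun (f x) = A.mulVecLin (bas.equivFun x) := by
  obtain rfl : f = Matrix.toLin bas bas A := bas.ext fun j => by rw [Matrix.toLin_self, h]
  simp only [Module.Basis.equivFun_apply, Matrix.repr_toLin, Matrix.mulVecLin_apply]

section CharTwo

variable {V : Type*} [AddCommGroup V] [Module (ZMod 2) V]

theorem neg_eq_self_of_zmod_two (v : V) : -v = v := by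
  rw [neg_eq_iff_add_eq_zero, ← two_smul (ZMod 2), show (2 : ZMod 2) = 0 from rfl, zero_smul]

theorem eq_of_add_eq_zero_of_zmod_two {x y : V} (h : x + y = 0) : x = y := by
  rw [add_eq_zero_iff_eq_neg, neg_eq_self_of_zmod_two] at h
  exact h

theorem linearIndependent_pair_of_zmod_two {x y : V} (hx : x ≠ 0) (hy : y ≠ 0) (hxy : x ≠ y) :
    LinearIndependent (ZMod 2) ![x, y] := by
  rw [linearIndependent_fin2]
  refine ⟨hy, fun c => ?_⟩
  obtain rfl | rfl : c = 0 ∨ c = 1 := by revert c; decide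
  · simpa using hx.symm
  · simpa using hxy.symm

theorem exists_basis_pair_of_zmod_two (hdim : Module.finrank (ZMod 2) V = 2) {x y : V}
    (hx : x ≠ 0) (hy : y ≠ 0) (hxy : x ≠ y) :
    ∃ bas : Module.Basis (Fin 2) (ZMod 2) V, bas 0 = x ∧ bas 1 = y := by
  have hli := linearIndependent_pair_of_zmod_two hx hy hxy
  have hcard : Fintype.card (Fin 2) = Module.finrank (ZMod 2) V := by simp [hdim]
  refine ⟨basisOfLinearIndependentOfCardEqFinrank hli hcard, ?_, ?_⟩ <;>
    simp [coe_basisOfLinearIndependentOfCardEqFinrank]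

theorem exists_ne_zero_apply_eq_self_of_mul_self_eq_one [Nontrivial V] {u : Module.End (ZMod 2) V}
    (hu : u * u = 1) : ∃ v ≠ 0, u v = v := by
  by_cases hid : ∀ x, u x = x
  · obtain ⟨v, hv⟩ := exists_ne (0 : V)
    exact ⟨v, hv, hid v⟩
  · push Not at hid
    obtain ⟨x, hx⟩ := hid
    refine ⟨x + u x, fun h => hx (eq_of_add_eq_zero_of_zmod_two h).symm, ?_⟩
    rw [map_add, ← Module.End.mul_apply, hu, Module.End.one_apply, add_comm]

theorem eq_one_of_mul_self_eq_one_of_commute (hdim : Module.finrank (ZMod 2) V = 2)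
    {f u : Module.End (ZMod 2) V} (hf_inj : Function.Injective f) (hf_fix : ∀ x, f x = x → x = 0)
    (hu : u * u = 1) (hcomm : Commute u f) : u = 1 := by
  have := Module.nontrivial_of_finrank_eq_succ hdim
  obtain ⟨w, hw, huw⟩ := exists_ne_zero_apply_eq_self_of_mul_self_eq_one hu
  obtain ⟨bas, hb0, hb1⟩ := exists_basis_pair_of_zmod_two hdim hw
    (hf_inj.ne_iff' (map_zero f) |>.mpr hw) (fun h => hw (hf_fix w h.symm))
  refine bas.ext (Fin.forall_fin_two.mpr ⟨?_, ?_⟩)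
  · simpa [hb0] using huw
  · rw [hb1, Module.End.one_apply, ← Module.End.mul_apply, hcomm.eq, Module.End.mul_apply, huw]

end CharTwo

namespace Representation

variable {G V : Type*} [Group G] [AddCommGroup V] [Module (ZMod 2) V]
  (ρ : Representation (ZMod 2) G V) {a b : G}

theorem apply_pow_three_eq_one (hdim : Module.finrank (ZMod 2) V = 2) (ha : a ^ 6 = 1)
    (hfix : ∀ v, ρ a v = v → v = 0) : ρ (a ^ 3) = 1 :=
  eq_one_of_mul_self_eq_one_of_commute hdim (ρ.apply_bijective a).injective hfix
    (by rw [← map_mul, ← pow_add, ha, map_one]) ((Commute.pow_self a 3).map ρ)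

theorem apply_apply_eq_apply_add (ha : ρ (a ^ 3) = 1) (hfix : ∀ v, ρ a v = v → v = 0) (v : V) :
    ρ a (ρ a v) = ρ a v + v := by
  have hcycle : ρ a (ρ a (ρ a v)) = v := by
    rw [← Module.End.mul_apply, ← Module.End.mul_apply, ← map_mul, ← map_mul, ← pow_three', ha,
      Module.End.one_apply]
  refine eq_of_add_eq_zero_of_zmod_two (hfix _ ?_)
  rw [map_add, map_add, hcycle]
  abel

theorem exists_ne_zero_apply_eq_apply (hdim : Module.finrank (ZMod 2) V = 2)
    (ha : ρ (a ^ 3) = 1) (hb : b ^ 2 = a ^ 3) (hab : a * b = b * a⁻¹) :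
    ∃ v ≠ 0, ρ b v = ρ a v := by
  have := Module.nontrivial_of_finrank_eq_succ hdim
  have hinv : ρ (a⁻¹ * b) * ρ (a⁻¹ * b) = 1 := by
    rw [← map_mul, show a⁻¹ * b * (a⁻¹ * b) = b ^ 2 by
      rw [mul_assoc, ← mul_assoc b, ← hab, sq, mul_assoc, inv_mul_cancel_left],
      hb, ha]
  obtain ⟨v, hv, hfixed⟩ := exists_ne_zero_apply_eq_self_of_mul_self_eq_one hinv
  refine ⟨v, hv, ?_⟩
  simpa only [← Module.End.mul_apply, ← map_mul, mul_inv_cancel_left] using congrArg (ρ a) hfixed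

theorem exists_linearEquiv_conj_binaryDihedral (hdim : Module.finrank (ZMod 2) V = 2)
    (ha : a ^ 6 = 1) (hb : b ^ 2 = a ^ 3) (hab : a * b = b * a⁻¹)
    (hfree : ∀ v, ρ (a ^ 2) v = v → v = 0) :
    ∃ e : V ≃ₗ[ZMod 2] (Fin 2 → ZMod 2),
      (∀ v, e (ρ a v) =
        Matrix.mulVecLin (!![0, 1; 1, 1] : Matrix (Fin 2) (Fin 2) (ZMod 2)) (e v)) ∧
      (∀ v, e (ρ b v) =
        Matrix.mulVecLin (!![0, 1; 1, 0] : Matrix (Fin 2) (Fin 2) (ZMod 2)) (e v)) := by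
  have hfix : ∀ v, ρ a v = v → v = 0 := fun v hv =>
    hfree v (by rw [sq, map_mul, Module.End.mul_apply, hv, hv])
  have ha3 := ρ.apply_pow_three_eq_one hdim ha hfix
  obtain ⟨v, hv, hbv⟩ := ρ.exists_ne_zero_apply_eq_apply hdim ha3 hb hab
  have hbav : ρ b (ρ a v) = v := by
    have hba : b * a = a⁻¹ * b := by
      rw [← inv_mul_cancel_left a (b * a), ← mul_assoc a b a, hab]; group
    rw [← Module.End.mul_apply, ← map_mul, hba, map_mul, Module.End.mul_apply, hbv, inv_self_apply]
  obtain ⟨bas, hb0, hb1⟩ := exists_basis_pair_of_zmod_two hdim hv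
    ((ρ.apply_bijective a).injective.ne_iff' (map_zero _) |>.mpr hv) (fun h => hv (hfix v h.symm))
  refine ⟨bas.equivFun, bas.equivFun_apply_eq_mulVecLin ?_, bas.equivFun_apply_eq_mulVecLin ?_⟩ <;>
    refine Fin.forall_fin_two.mpr ⟨?_, ?_⟩ <;>
    simp [Fin.sum_univ_two, hb0, hb1, hbv, hbav, ρ.apply_apply_eq_apply_add ha3 hfix, add_comm]

end Representation

theorem gammaRels_of_zero_pow_six : (PresentedGroup.of 0 : PresentedGroup gammaRels) ^ 6 = 1 :=
  (map_pow _ _ _).symm.trans (PresentedGroup.one_of_mem (Set.mem_insert _ _))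

theorem gammaRels_of_one_sq :
    (PresentedGroup.of 1 : PresentedGroup gammaRels) ^ 2 = PresentedGroup.of 0 ^ 3 :=
  (map_pow _ _ _).symm.trans <| (PresentedGroup.mk_eq_mk_of_mul_inv_mem
    (Set.mem_insert_of_mem _ (Set.mem_insert _ _))).trans (map_pow _ _ _)

theorem gammaRels_of_zero_mul_of_one :
    (PresentedGroup.of 0 * PresentedGroup.of 1 : PresentedGroup gammaRels) =
      PresentedGroup.of 1 * (PresentedGroup.of 0)⁻¹ := by
  have h := PresentedGroup.mk_eq_mk_of_mul_inv_mem
    (Set.mem_insert_of_mem _ (Set.mem_insert_of_mem _ (Set.mem_singleton _)) :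
      FreeGroup.of 0 * FreeGroup.of 1 * (FreeGroup.of 1 * (FreeGroup.of 0)⁻¹)⁻¹ ∈ gammaRels)
  rwa [map_mul, map_mul, map_inv] at h

/-- Any 2-dimensional `F₂`-representation of `Γ_Δ` on which `c = a²` acts without
nonzero fixed vectors is isomorphic to `D`, given by `ρ_D(a) = (0 1; 1 1)`,
`ρ_D(b) = (0 1; 1 0)`. -/
theorem stmt_12 (V : Type) [AddCommGroup V] [Module (ZMod 2) V]
    (hdim : Module.finrank (ZMod 2) V = 2)
    (ρ : Representation (ZMod 2) (PresentedGroup gammaRels) V)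
    (hfree : ∀ v, ρ (PresentedGroup.of 0 ^ 2) v = v → v = 0) :
    ∃ e : V ≃ₗ[ZMod 2] (Fin 2 → ZMod 2),
      (∀ v, e (ρ (PresentedGroup.of 0) v) =
        Matrix.mulVecLin (!![0, 1; 1, 1] : Matrix (Fin 2) (Fin 2) (ZMod 2))
          (e v)) ∧
      (∀ v, e (ρ (PresentedGroup.of 1) v) =
        Matrix.mulVecLin (!![0, 1; 1, 0] : Matrix (Fin 2) (Fin 2) (ZMod 2))
          (e v)) :=
  ρ.exists_linearEquiv_conj_binaryDihedral hdim gammaRels_of_zero_pow_six gammaRels_of_one_sq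
    gammaRels_of_zero_mul_of_one hfree
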